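/- The matrix-valued polynomials P_r are orthogonal with respect to the matrix-valued inner product ⟨P, Q⟩_Θ = ∫ P(Θ(x)) W(x) Q(Θ(x))ᵀ dμ(x): for all r, l ≥ 0 one has ∫ P_r(Θ(x)) W(x) P_l(Θ(x))ᵀ dμ(x) = δ_{r,l} · H_r, where H_r = diag(h_{mr}, h_{mr+1}, ..., h_{mr+m-1}). -/
import Mathlib


/-- The semi-infinite tridiagonal Jacobi matrix with diagonal `b`, superdiagonal `a`
and subdiagonal `c` (`J_{n+1,n} = c_{n+1}`). -/
noncomputable def jacobiMat (a b c : ℕ → ℝ) : ℕ → ℕ → ℝ := fun i j =>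
  if i = j then b i
  else if j = i + 1 then a i
  else if i = j + 1 then c i
  else 0

/-- Entrywise powers of a banded semi-infinite matrix, defined by the recursion
`(J^{r+1})_{i,j} = Σ_{l : |l-j| ≤ 1} (J^r)_{i,l} J_{l,j}`. -/
noncomputable def jacobiPow (J : ℕ → ℕ → ℝ) : ℕ → ℕ → ℕ → ℝ
  | 0 => fun i j => if i = j then 1 else 0
  | r + 1 => fun i j => ∑ l ∈ Finset.Icc (j - 1) (j + 1), jacobiPow J r i l * J l j

/-- The matrix `Θ(J) = Σ_{k=0}^m α_k J^k`. -/
noncomputable def thetaOfJ (α : ℕ → ℝ) (m : ℕ) (J : ℕ → ℕ → ℝ) : ℕ → ℕ → ℝ :=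
  fun i j => ∑ k ∈ Finset.range (m + 1), α k * jacobiPow J k i j

/-- The `m × m` block `A_r` of `Θ(J)`: `(A_r)_{s,t} = Θ(J)_{mr+s, m(r+1)+t}`. -/
noncomputable def blockA (α : ℕ → ℝ) (m : ℕ) (J : ℕ → ℕ → ℝ) (r : ℕ) :
    Matrix (Fin m) (Fin m) ℝ :=
  fun s t => thetaOfJ α m J (m * r + s) (m * (r + 1) + t)

/-- The `m × m` block `B_r` of `Θ(J)`: `(B_r)_{s,t} = Θ(J)_{mr+s, mr+t}`. -/
noncomputable def blockB (α : ℕ → ℝ) (m : ℕ) (J : ℕ → ℕ → ℝ) (r : ℕ) :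
    Matrix (Fin m) (Fin m) ℝ :=
  fun s t => thetaOfJ α m J (m * r + s) (m * r + t)

/-- The `m × m` block `C_r` of `Θ(J)`: `(C_r)_{s,t} = Θ(J)_{mr+s, m(r-1)+t}`, with `C_0 = 0`. -/
noncomputable def blockC (α : ℕ → ℝ) (m : ℕ) (J : ℕ → ℕ → ℝ) (r : ℕ) :
    Matrix (Fin m) (Fin m) ℝ :=
  fun s t => if r = 0 then 0 else thetaOfJ α m J (m * r + s) (m * (r - 1) + t)

lemma jacobiMat_eq_zero (a b c : ℕ → ℝ) {i j : ℕ}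
    (hij : ¬ (i = j ∨ j = i + 1 ∨ i = j + 1)) : jacobiMat a b c i j = 0 := by
  push_neg at hij
  simp [jacobiMat, hij.1, hij.2.1, hij.2.2]

lemma jacobiPow_band_upper (J : ℕ → ℕ → ℝ) : ∀ k n j, n + k < j → jacobiPow J k n j = 0 := by
  intro k
  induction k with
  | zero =>
    intro n j hj
    simp only [jacobiPow]
    rw [if_neg (by omega)]
  | succ k ih =>
    intro n j hj
    simp only [jacobiPow]
    apply Finset.sum_eq_zero
    intro l hl
    rw [Finset.mem_Icc] at hl
    rw [ih n l (by omega), zero_mul]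

lemma jacobiPow_band_lower (J : ℕ → ℕ → ℝ) : ∀ k n j, j + k < n → jacobiPow J k n j = 0 := by
  intro k
  induction k with
  | zero =>
    intro n j hj
    simp only [jacobiPow]
    rw [if_neg (by omega)]
  | succ k ih =>
    intro n j hj
    simp only [jacobiPow]
    apply Finset.sum_eq_zero
    intro l hl
    rw [Finset.mem_Icc] at hl
    rw [ih n l (by omega), zero_mul]

lemma jacobiPow_top (a b c : ℕ → ℝ) :
    ∀ k n, jacobiPow (jacobiMat a b c) k n (n + k) = ∏ d ∈ Finset.range k, a (n + d) := by
  intro k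
  induction k with
  | zero => intro n; simp [jacobiPow]
  | succ k ih =>
    intro n
    simp only [jacobiPow]
    rw [Finset.sum_eq_single (n + k)]
    · have : jacobiMat a b c (n + k) (n + (k + 1)) = a (n + k) := by
        simp only [jacobiMat]
        rw [if_neg (by omega), if_pos (by omega)]
      rw [this, ih n, Finset.prod_range_succ]
    · intro l hl hne
      rw [Finset.mem_Icc] at hl
      rcases Nat.lt_or_ge l (n + k) with h1 | h1
      · -- l = n + k + 1 - 1 could be < n+k only if ... ; J l (n+k+1) = 0 since l + 1 < n+k+1
        rw [jacobiMat_eq_zero a b c (by omega), mul_zero]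
      · -- l > n + k (since ≠): jacobiPow k n l = 0 by band upper
        rw [jacobiPow_band_upper _ k n l (by omega), zero_mul]
    · intro hmem
      exfalso; rw [Finset.mem_Icc] at hmem; omega

open Polynomial in
lemma xmul_eq_sum (a b c : ℕ → ℝ) (p : ℕ → Polynomial ℝ)
    (hprec0 : Polynomial.X * p 0 = Polynomial.C (a 0) * p 1 + Polynomial.C (b 0) * p 0)
    (hprec : ∀ n, 1 ≤ n →
      Polynomial.X * p n
        = Polynomial.C (a n) * p (n + 1) + Polynomial.C (b n) * p n
          + Polynomial.C (c n) * p (n - 1))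
    (j M : ℕ) (hM : j + 1 < M) :
    Polynomial.X * p j = ∑ i ∈ Finset.range M, Polynomial.C (jacobiMat a b c j i) * p i := by
  have hsub : Finset.Icc (j - 1) (j + 1) ⊆ Finset.range M := by
    intro x hx; rw [Finset.mem_Icc] at hx; rw [Finset.mem_range]; omega
  rw [← Finset.sum_subset hsub (by
    intro x hx hnx
    rw [Finset.mem_Icc] at hnx
    rw [jacobiMat_eq_zero a b c (by omega), map_zero, zero_mul])]
  rcases Nat.eq_zero_or_pos j with hj | hj
  · subst hj
    have : Finset.Icc (0 - 1) (0 + 1) = {0, 1} := by decide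
    rw [this, Finset.sum_insert (by decide), Finset.sum_singleton, hprec0]
    have h00 : jacobiMat a b c 0 0 = b 0 := by simp [jacobiMat]
    have h01 : jacobiMat a b c 0 1 = a 0 := by simp [jacobiMat]
    rw [h00, h01]; ring
  · have : Finset.Icc (j - 1) (j + 1) = {j - 1, j, j + 1} := by
      ext x; simp only [Finset.mem_Icc, Finset.mem_insert, Finset.mem_singleton]; omega
    rw [this, Finset.sum_insert (by
        simp only [Finset.mem_insert, Finset.mem_singleton]; omega),
      Finset.sum_insert (by simp only [Finset.mem_singleton]; omega),
      Finset.sum_singleton, hprec j hj]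
    have h1 : jacobiMat a b c j (j - 1) = c j := by
      simp only [jacobiMat]; rw [if_neg (by omega), if_neg (by omega), if_pos (by omega)]
    have h2 : jacobiMat a b c j j = b j := by simp [jacobiMat]
    have h3 : jacobiMat a b c j (j + 1) = a j := by
      simp only [jacobiMat]
      rw [if_neg (by omega)]
      simp
    rw [h1, h2, h3]; ring

lemma sum_jacobiPow_mul (J : ℕ → ℕ → ℝ) (a b c : ℕ → ℝ) (hJ : J = jacobiMat a b c)
    (k n i N : ℕ) (hN : n + k < N) :
    ∑ j ∈ Finset.range N, jacobiPow J k n j * J j i = jacobiPow J (k + 1) n i := by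
  have h1 : ∑ j ∈ Finset.range N, jacobiPow J k n j * J j i
      = ∑ j ∈ Finset.range N ∩ Finset.Icc (i - 1) (i + 1), jacobiPow J k n j * J j i := by
    rw [Finset.sum_subset Finset.inter_subset_left]
    intro x hx hnx
    rw [Finset.mem_inter] at hnx
    have : x ∉ Finset.Icc (i - 1) (i + 1) := fun hc => hnx ⟨hx, hc⟩
    rw [Finset.mem_Icc] at this
    rw [hJ, jacobiMat_eq_zero a b c (by omega), mul_zero]
  rw [h1]
  simp only [jacobiPow]
  rw [Finset.sum_subset Finset.inter_subset_right]
  intro x hx hnx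
  rw [Finset.mem_inter] at hnx
  have : x ∉ Finset.range N := fun hc => hnx ⟨hc, hx⟩
  rw [Finset.mem_range] at this
  rw [jacobiPow_band_upper J k n x (by omega), zero_mul]

section
variable (a b c : ℕ → ℝ) (p : ℕ → Polynomial ℝ)
    (hprec0 : Polynomial.X * p 0 = Polynomial.C (a 0) * p 1 + Polynomial.C (b 0) * p 0)
    (hprec : ∀ n, 1 ≤ n →
      Polynomial.X * p n
        = Polynomial.C (a n) * p (n + 1) + Polynomial.C (b n) * p n
          + Polynomial.C (c n) * p (n - 1))

include hprec0 hprec in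
lemma xpow_mul_eq_sum : ∀ k n N, n + k < N →
    Polynomial.X ^ k * p n
      = ∑ j ∈ Finset.range N, Polynomial.C (jacobiPow (jacobiMat a b c) k n j) * p j := by
  intro k
  induction k with
  | zero =>
    intro n N hN
    rw [pow_zero, one_mul, Finset.sum_eq_single n]
    · simp [jacobiPow]
    · intro j hj hne
      simp only [jacobiPow]
      rw [if_neg (by omega), map_zero, zero_mul]
    · intro hn; exact absurd (Finset.mem_range.mpr (by omega)) hn
  | succ k ih =>
    intro n N hN
    have hN1 : 1 ≤ N := by omega
    have key : Polynomial.X ^ k * p n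
        = ∑ j ∈ Finset.range (N - 1),
            Polynomial.C (jacobiPow (jacobiMat a b c) k n j) * p j :=
      ih n (N - 1) (by omega)
    calc Polynomial.X ^ (k + 1) * p n
        = Polynomial.X ^ k * (Polynomial.X * p n) := by ring
      _ = Polynomial.X * (Polynomial.X ^ k * p n) := by ring
      _ = ∑ j ∈ Finset.range (N - 1),
            Polynomial.C (jacobiPow (jacobiMat a b c) k n j) * (Polynomial.X * p j) := by
          rw [key, Finset.mul_sum]
          exact Finset.sum_congr rfl fun j hj => by ring
      _ = ∑ j ∈ Finset.range (N - 1),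
            Polynomial.C (jacobiPow (jacobiMat a b c) k n j)
              * ∑ i ∈ Finset.range N, Polynomial.C (jacobiMat a b c j i) * p i := by
          refine Finset.sum_congr rfl fun j hj => ?_
          rw [Finset.mem_range] at hj
          rw [xmul_eq_sum a b c p hprec0 hprec j N (by omega)]
      _ = ∑ j ∈ Finset.range (N - 1), ∑ i ∈ Finset.range N,
            Polynomial.C (jacobiPow (jacobiMat a b c) k n j * jacobiMat a b c j i) * p i := by
          refine Finset.sum_congr rfl fun j hj => ?_
          rw [Finset.mul_sum]
          exact Finset.sum_congr rfl fun i hi => by rw [map_mul]; ring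
      _ = ∑ i ∈ Finset.range N, ∑ j ∈ Finset.range (N - 1),
            Polynomial.C (jacobiPow (jacobiMat a b c) k n j * jacobiMat a b c j i) * p i :=
          Finset.sum_comm
      _ = ∑ i ∈ Finset.range N,
            Polynomial.C (jacobiPow (jacobiMat a b c) (k + 1) n i) * p i := by
          refine Finset.sum_congr rfl fun i hi => ?_
          rw [← sum_jacobiPow_mul (jacobiMat a b c) a b c rfl k n i (N - 1) (by omega),
            map_sum, Finset.sum_mul]
end

lemma thetaOfJ_band_upper (α : ℕ → ℝ) (m : ℕ) (J : ℕ → ℕ → ℝ) (n j : ℕ) (hj : n + m < j) :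
    thetaOfJ α m J n j = 0 := by
  apply Finset.sum_eq_zero
  intro k hk
  rw [Finset.mem_range] at hk
  rw [jacobiPow_band_upper J k n j (by omega), mul_zero]

lemma thetaOfJ_band_lower (α : ℕ → ℝ) (m : ℕ) (J : ℕ → ℕ → ℝ) (n j : ℕ) (hj : j + m < n) :
    thetaOfJ α m J n j = 0 := by
  apply Finset.sum_eq_zero
  intro k hk
  rw [Finset.mem_range] at hk
  rw [jacobiPow_band_lower J k n j (by omega), mul_zero]

section
variable (a b c : ℕ → ℝ) (p : ℕ → Polynomial ℝ)
    (hprec0 : Polynomial.X * p 0 = Polynomial.C (a 0) * p 1 + Polynomial.C (b 0) * p 0)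
    (hprec : ∀ n, 1 ≤ n →
      Polynomial.X * p n
        = Polynomial.C (a n) * p (n + 1) + Polynomial.C (b n) * p n
          + Polynomial.C (c n) * p (n - 1))
    (m : ℕ) (α : ℕ → ℝ)

include hprec0 hprec in
lemma theta_mul_eq_sum (n N : ℕ) (hN : n + m < N) :
    (∑ k ∈ Finset.range (m + 1), Polynomial.C (α k) * Polynomial.X ^ k) * p n
      = ∑ j ∈ Finset.range N,
          Polynomial.C (thetaOfJ α m (jacobiMat a b c) n j) * p j := by
  rw [Finset.sum_mul]
  calc ∑ k ∈ Finset.range (m + 1), Polynomial.C (α k) * Polynomial.X ^ k * p n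
      = ∑ k ∈ Finset.range (m + 1), ∑ j ∈ Finset.range N,
          Polynomial.C (α k * jacobiPow (jacobiMat a b c) k n j) * p j := by
        refine Finset.sum_congr rfl fun k hk => ?_
        rw [Finset.mem_range] at hk
        rw [mul_assoc, xpow_mul_eq_sum a b c p hprec0 hprec k n N (by omega), Finset.mul_sum]
        exact Finset.sum_congr rfl fun j hj => by rw [map_mul]; ring
    _ = ∑ j ∈ Finset.range N, ∑ k ∈ Finset.range (m + 1),
          Polynomial.C (α k * jacobiPow (jacobiMat a b c) k n j) * p j := Finset.sum_comm
    _ = ∑ j ∈ Finset.range N,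
          Polynomial.C (thetaOfJ α m (jacobiMat a b c) n j) * p j := by
        refine Finset.sum_congr rfl fun j hj => ?_
        rw [thetaOfJ, map_sum, Finset.sum_mul]

include hprec0 hprec in
lemma block_rec (hm : 1 ≤ m) (r : ℕ) (s : Fin m) :
    (∑ k ∈ Finset.range (m + 1), Polynomial.C (α k) * Polynomial.X ^ k) * p (m * r + s)
      = (∑ w : Fin m,
          Polynomial.C (blockA α m (jacobiMat a b c) r s w) * p (m * (r + 1) + w))
        + (∑ w : Fin m,
          Polynomial.C (blockB α m (jacobiMat a b c) r s w) * p (m * r + w))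
        + (∑ w : Fin m,
          Polynomial.C (blockC α m (jacobiMat a b c) r s w) * p (m * (r - 1) + w)) := by
  have hs : (s : ℕ) < m := s.isLt
  rw [theta_mul_eq_sum a b c p hprec0 hprec m α (m * r + s) (m * (r + 2)) (by nlinarith)]
  set f : ℕ → Polynomial ℝ :=
    fun j => Polynomial.C (thetaOfJ α m (jacobiMat a b c) (m * r + s) j) * p j with hf
  have block : ∀ q : ℕ, ∑ j ∈ Finset.Ico (m * q) (m * (q + 1)), f j
      = ∑ w : Fin m, f (m * q + w) := by
    intro q
    rw [Finset.sum_Ico_eq_sum_range, Nat.mul_succ, Nat.add_sub_cancel_left,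
      ← Fin.sum_univ_eq_sum_range (fun w => f (m * q + w)) m]
  have hA : ∑ j ∈ Finset.Ico (m * (r + 1)) (m * (r + 2)), f j
      = ∑ w : Fin m, Polynomial.C (blockA α m (jacobiMat a b c) r s w) * p (m * (r + 1) + w) := by
    rw [block (r + 1)]; rfl
  have hB : ∑ j ∈ Finset.Ico (m * r) (m * (r + 1)), f j
      = ∑ w : Fin m, Polynomial.C (blockB α m (jacobiMat a b c) r s w) * p (m * r + w) := by
    rw [block r]; rfl
  rcases Nat.eq_zero_or_pos r with hr | hr
  · subst hr
    have hC : ∑ w : Fin m, Polynomial.C (blockC α m (jacobiMat a b c) 0 s w) * p (m * (0 - 1) + w)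
        = 0 := by
      apply Finset.sum_eq_zero
      intro w _
      rw [blockC, if_pos rfl, map_zero, zero_mul]
    rw [hC, add_zero, Finset.range_eq_Ico,
      ← Finset.sum_Ico_consecutive f (Nat.zero_le (m * 1)) (by nlinarith)]
    have h01 : (Finset.Ico 0 (m * 1)) = Finset.Ico (m * 0) (m * (0 + 1)) := by norm_num
    have h12 : (Finset.Ico (m * 1) (m * (0 + 2))) = Finset.Ico (m * 1) (m * (1 + 1)) := by norm_num
    rw [h01, h12, hB, hA]; ring
  · have hzero : ∑ j ∈ Finset.Ico 0 (m * (r - 1)), f j = 0 := by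
      apply Finset.sum_eq_zero
      intro j hj
      rw [Finset.mem_Ico] at hj
      have : j + m < m * r + s := by
        have h1 : j + 1 ≤ m * (r - 1) := hj.2
        have h2 : m * (r - 1) + m = m * r := by
          have : r - 1 + 1 = r := by omega
          calc m * (r - 1) + m = m * (r - 1 + 1) := by ring
            _ = m * r := by rw [this]
        omega
      rw [hf]
      simp only [thetaOfJ_band_lower α m (jacobiMat a b c) (m * r + s) j this, map_zero, zero_mul]
    have hC : ∑ j ∈ Finset.Ico (m * (r - 1)) (m * r), f j
        = ∑ w : Fin m, Polynomial.C (blockC α m (jacobiMat a b c) r s w) * p (m * (r - 1) + w) := by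
      have hr1 : m * (r - 1 + 1) = m * r := by congr 1; omega
      have := block (r - 1)
      rw [hr1] at this
      rw [this]
      refine Finset.sum_congr rfl fun w _ => ?_
      rw [hf, blockC, if_neg (by omega)]
    have hle1 : m * (r - 1) ≤ m * r := Nat.mul_le_mul_left m (by omega)
    have hle2 : m * r ≤ m * (r + 1) := Nat.mul_le_mul_left m (by omega)
    have hle3 : m * (r + 1) ≤ m * (r + 2) := Nat.mul_le_mul_left m (by omega)
    rw [Finset.range_eq_Ico,
      ← Finset.sum_Ico_consecutive f (Nat.zero_le (m * (r - 1)))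
        (le_trans hle1 (le_trans hle2 hle3)),
      ← Finset.sum_Ico_consecutive f hle1 (le_trans hle2 hle3),
      ← Finset.sum_Ico_consecutive f hle2 hle3,
      hzero, hC, hB, hA]
    ring
end

lemma blockA_det_isUnit (a b c : ℕ → ℝ) (ha : ∀ n, 0 < a n) (m : ℕ) (hm : 1 ≤ m)
    (α : ℕ → ℝ) (hα : α m ≠ 0) (r : ℕ) :
    IsUnit (blockA α m (jacobiMat a b c) r).det := by
  have htri : (blockA α m (jacobiMat a b c) r).BlockTriangular OrderDual.toDual := by
    intro s t hst
    have hst' : (s : ℕ) < t := hst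
    show thetaOfJ α m (jacobiMat a b c) (m * r + s) (m * (r + 1) + t) = 0
    apply Finset.sum_eq_zero
    intro k hk
    rw [Finset.mem_range] at hk
    have : m * r + (s : ℕ) + k < m * (r + 1) + t := by
      have : m * (r + 1) = m * r + m := by ring
      omega
    rw [jacobiPow_band_upper _ k _ _ this, mul_zero]
  rw [Matrix.det_of_lowerTriangular _ htri]
  rw [isUnit_iff_ne_zero]
  apply Finset.prod_ne_zero_iff.mpr
  intro s _
  have hdiag : blockA α m (jacobiMat a b c) r s s
      = α m * ∏ d ∈ Finset.range m, a (m * r + s + d) := by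
    have hkey : m * (r + 1) + (s : ℕ) = (m * r + s) + m := by ring
    show thetaOfJ α m (jacobiMat a b c) (m * r + ↑s) (m * (r + 1) + ↑s) = _
    rw [show thetaOfJ α m (jacobiMat a b c) (m * r + ↑s) (m * (r + 1) + ↑s)
        = ∑ k ∈ Finset.range (m + 1), α k * jacobiPow (jacobiMat a b c) k (m * r + ↑s)
            (m * (r + 1) + ↑s) from rfl]
    rw [Finset.sum_range_succ]
    have hz : ∀ k ∈ Finset.range m, α k * jacobiPow (jacobiMat a b c) k (m * r + ↑s)
        (m * (r + 1) + ↑s) = 0 := by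
      intro k hk
      rw [Finset.mem_range] at hk
      rw [jacobiPow_band_upper _ k _ _ (by omega), mul_zero]
    rw [Finset.sum_eq_zero hz, zero_add, hkey, jacobiPow_top]
  rw [hdiag]
  apply mul_ne_zero hα
  apply ne_of_gt
  exact Finset.prod_pos fun d _ => ha _

open Polynomial in
lemma Q_eq (a b c : ℕ → ℝ) (ha : ∀ n, 0 < a n)
    (p : ℕ → Polynomial ℝ) (hp0 : p 0 = 1)
    (hprec0 : Polynomial.X * p 0 = Polynomial.C (a 0) * p 1 + Polynomial.C (b 0) * p 0)
    (hprec : ∀ n, 1 ≤ n →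
      Polynomial.X * p n
        = Polynomial.C (a n) * p (n + 1) + Polynomial.C (b n) * p n
          + Polynomial.C (c n) * p (n - 1))
    (m : ℕ) (hm : 1 ≤ m) (α : ℕ → ℝ) (hα : α m ≠ 0)
    (P : ℕ → Matrix (Fin m) (Fin m) (Polynomial ℝ))
    (hP0 : P 0 = 1)
    (hPrec : ∀ r : ℕ,
      (blockA α m (jacobiMat a b c) r).map Polynomial.C * P (r + 1)
        = (Polynomial.X : Polynomial ℝ) • P r
          - (blockB α m (jacobiMat a b c) r).map Polynomial.C * P r
          - (blockC α m (jacobiMat a b c) r).map Polynomial.C * P (r - 1)) :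
    ∀ r : ℕ, ∀ s : Fin m,
      ∑ u : Fin m,
        ((P r s u).comp (∑ k ∈ Finset.range (m + 1), Polynomial.C (α k) * Polynomial.X ^ k))
          * p u
        = p (m * r + s) := by
  set Θp : Polynomial ℝ := ∑ k ∈ Finset.range (m + 1), Polynomial.C (α k) * Polynomial.X ^ k
    with hΘp
  set f : Polynomial ℝ →+* Polynomial ℝ := Polynomial.compRingHom Θp with hfdef
  have hfC : ∀ x : ℝ, f (Polynomial.C x) = Polynomial.C x := fun x => Polynomial.C_comp
  set q : ℕ → Fin m → Polynomial ℝ := fun r s => p (m * r + s) with hq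
  set Q : ℕ → Fin m → Polynomial ℝ :=
    fun r => ((P r).map f).mulVec (fun u : Fin m => p u) with hQ
  -- mulVec of a C-mapped real matrix
  have hmapC : ∀ (M : Matrix (Fin m) (Fin m) ℝ), (M.map Polynomial.C).map f
      = M.map Polynomial.C := by
    intro M; ext s u; simp [Matrix.map_apply, hfC]
  -- the block recurrence in mulVec form
  have hblock : ∀ r : ℕ,
      Θp • q r = ((blockA α m (jacobiMat a b c) r).map Polynomial.C).mulVec (q (r + 1))
        + ((blockB α m (jacobiMat a b c) r).map Polynomial.C).mulVec (q r)
        + ((blockC α m (jacobiMat a b c) r).map Polynomial.C).mulVec (q (r - 1)) := by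
    intro r
    funext s
    have := block_rec a b c p hprec0 hprec m α hm r s
    simpa [Matrix.mulVec, dotProduct, Matrix.map_apply, Pi.add_apply, Pi.smul_apply,
      smul_eq_mul, hq] using this
  -- the step
  have hstep : ∀ r : ℕ, Q r = q r → Q (r - 1) = q (r - 1) → Q (r + 1) = q (r + 1) := by
    intro r ih1 ih2
    set A := blockA α m (jacobiMat a b c) r with hA
    have hdet : IsUnit ((A.map Polynomial.C) : Matrix (Fin m) (Fin m) (Polynomial ℝ)).det := by
      rw [← RingHom.mapMatrix_apply, ← RingHom.map_det]
      exact (blockA_det_isUnit a b c ha m hm α hα r).map Polynomial.C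
    have key : (A.map Polynomial.C).mulVec (Q (r + 1)) = (A.map Polynomial.C).mulVec (q (r + 1)) := by
      have h1 : (A.map Polynomial.C).mulVec (Q (r + 1))
          = (((A.map Polynomial.C) * P (r + 1)).map f).mulVec (fun u : Fin m => p u) := by
        rw [Matrix.map_mul, hmapC, hQ, Matrix.mulVec_mulVec]
      rw [h1, hPrec r]
      have hXsmul : (((Polynomial.X : Polynomial ℝ) • P r - (blockB α m (jacobiMat a b c) r).map Polynomial.C * P r
          - (blockC α m (jacobiMat a b c) r).map Polynomial.C * P (r - 1)).map f)
          = Θp • ((P r).map f : Matrix (Fin m) (Fin m) (Polynomial ℝ))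
            - ((blockB α m (jacobiMat a b c) r).map Polynomial.C) * (P r).map f
            - ((blockC α m (jacobiMat a b c) r).map Polynomial.C) * (P (r - 1)).map f := by
        have hfX : f Polynomial.X = Θp := Polynomial.X_comp
        ext s u
        simp only [Matrix.map_apply, Matrix.sub_apply, Matrix.smul_apply, Matrix.mul_apply,
          map_sub, map_sum, map_mul, hfX, hfC, smul_eq_mul]
      rw [hXsmul, Matrix.sub_mulVec, Matrix.sub_mulVec, Matrix.smul_mulVec,
        ← Matrix.mulVec_mulVec, ← Matrix.mulVec_mulVec]
      have e1 : ((P r).map ⇑f).mulVec (fun u : Fin m => p ↑u) = q r := ih1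
      have e2 : ((P (r - 1)).map ⇑f).mulVec (fun u : Fin m => p ↑u) = q (r - 1) := ih2
      rw [e1, e2, hblock r]
      abel
    calc Q (r + 1) = ((A.map Polynomial.C)⁻¹ * (A.map Polynomial.C)).mulVec (Q (r + 1)) := by
          rw [Matrix.nonsing_inv_mul _ hdet, Matrix.one_mulVec]
      _ = ((A.map Polynomial.C)⁻¹ * (A.map Polynomial.C)).mulVec (q (r + 1)) := by
          rw [← Matrix.mulVec_mulVec, key, Matrix.mulVec_mulVec]
      _ = q (r + 1) := by rw [Matrix.nonsing_inv_mul _ hdet, Matrix.one_mulVec]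
  -- base case
  have hbase : Q 0 = q 0 := by
    have : Q 0 = ((P 0).map ⇑f).mulVec (fun u : Fin m => p ↑u) := rfl
    rw [this, hP0, Matrix.map_one _ (map_zero f) (map_one f), Matrix.one_mulVec]
    funext s
    simp [hq]
  -- induction
  have hall : ∀ r, Q r = q r := by
    intro r
    induction r using Nat.strong_induction_on with
    | _ r ih =>
      match r with
      | 0 => exact hbase
      | Nat.succ r => exact hstep r (ih r (by omega)) (ih (r - 1) (by omega))
  intro r s
  have := congrFun (hall r) s
  rw [hQ] at this
  simpa [Matrix.mulVec, dotProduct, Matrix.map_apply, hfdef,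
    Polynomial.coe_compRingHom_apply] using this

open MeasureTheory

/-- the matrix-valued polynomials `P_r` are orthogonal with respect to
`⟨P,Q⟩_Θ = ∫ P(Θ(x)) W(x) Q(Θ(x))ᵀ dμ(x)` with `W(x) = 𝐩_0(x) 𝐩_0(x)ᵀ`:
`⟨P_r, P_l⟩_Θ = δ_{r,l} H_r` where `H_r = diag(h_{mr},…,h_{mr+m-1})`
(stated entrywise, the `(s,t)` entry of the product being
`Σ_{u,v} P_r(Θ(x))_{s,u} p_u(x) p_v(x) P_l(Θ(x))_{t,v}`). -/
theorem matrix_valued_orthogonality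
    (a b : ℕ → ℝ) (c : ℕ → ℝ) (ha : ∀ n, 0 < a n)
    (p : ℕ → Polynomial ℝ) (hp0 : p 0 = 1)
    (hprec0 : Polynomial.X * p 0 = Polynomial.C (a 0) * p 1 + Polynomial.C (b 0) * p 0)
    (hprec : ∀ n, 1 ≤ n →
      Polynomial.X * p n
        = Polynomial.C (a n) * p (n + 1) + Polynomial.C (b n) * p n
          + Polynomial.C (c n) * p (n - 1))
    (m : ℕ) (hm : 1 ≤ m) (α : ℕ → ℝ) (hα : α m ≠ 0)
    (P : ℕ → Matrix (Fin m) (Fin m) (Polynomial ℝ))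
    (hP0 : P 0 = 1)
    (hPrec : ∀ r : ℕ,
      (blockA α m (jacobiMat a b c) r).map Polynomial.C * P (r + 1)
        = (Polynomial.X : Polynomial ℝ) • P r
          - (blockB α m (jacobiMat a b c) r).map Polynomial.C * P r
          - (blockC α m (jacobiMat a b c) r).map Polynomial.C * P (r - 1))
    (μ : Measure ℝ)
    (hmom : ∀ n : ℕ, Integrable (fun x : ℝ => x ^ n) μ)
    (h : ℕ → ℝ) (hh : ∀ n, 0 < h n)
    (horth : ∀ n k : ℕ,
      ∫ x : ℝ, (p n).eval x * (p k).eval x ∂μ = if n = k then h n else 0)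
    (r l : ℕ) (s t : Fin m) :
    ∫ x : ℝ,
        (∑ u : Fin m, ∑ v : Fin m,
          ((P r s u).comp
              (∑ k ∈ Finset.range (m + 1), Polynomial.C (α k) * Polynomial.X ^ k)).eval x
            * ((p (u : ℕ)).eval x * (p (v : ℕ)).eval x)
            * ((P l t v).comp
              (∑ k ∈ Finset.range (m + 1), Polynomial.C (α k) * Polynomial.X ^ k)).eval x)
        ∂μ
      = if r = l then (if s = t then h (m * r + s) else 0) else 0 := by
  have hQ := Q_eq a b c ha p hp0 hprec0 hprec m hm α hα P hP0 hPrec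

  set Θp : Polynomial ℝ := ∑ k ∈ Finset.range (m + 1), Polynomial.C (α k) * Polynomial.X ^ k
    with hΘp
  have hev : ∀ (r : ℕ) (s : Fin m) (x : ℝ),
      ∑ u : Fin m, ((P r s u).comp Θp).eval x * (p (u : ℕ)).eval x
        = (p (m * r + s)).eval x := by
    intro r s x
    have := congrArg (Polynomial.eval x) (hQ r s)
    simpa only [Polynomial.eval_finset_sum, Polynomial.eval_mul] using this
  have hpt : ∀ x : ℝ,
      (∑ u : Fin m, ∑ v : Fin m,
          ((P r s u).comp Θp).eval x * ((p (u : ℕ)).eval x * (p (v : ℕ)).eval x)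
            * ((P l t v).comp Θp).eval x)
        = (p (m * r + s)).eval x * (p (m * l + t)).eval x := by
    intro x
    rw [← hev r s x, ← hev l t x, Finset.sum_mul_sum]
    refine Finset.sum_congr rfl fun u _ => Finset.sum_congr rfl fun v _ => by ring
  rw [show (fun x : ℝ =>
      (∑ u : Fin m, ∑ v : Fin m,
          ((P r s u).comp Θp).eval x * ((p (u : ℕ)).eval x * (p (v : ℕ)).eval x)
            * ((P l t v).comp Θp).eval x))
      = fun x : ℝ => (p (m * r + s)).eval x * (p (m * l + t)).eval x from funext hpt]
  rw [horth (m * r + s) (m * l + t)]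
  by_cases hrl : r = l
  · subst hrl
    by_cases hst : s = t
    · subst hst
      rw [if_pos rfl, if_pos rfl, if_pos rfl]
    · rw [if_neg (by
        intro hc
        exact hst (Fin.ext (by omega))), if_pos rfl, if_neg hst]
  · rw [if_neg ?_, if_neg hrl]
    intro hc
    have hs : (s:ℕ) < m := s.isLt
    have ht : (t:ℕ) < m := t.isLt
    have h1 : (m * r + (s:ℕ)) % m = (m * l + (t:ℕ)) % m := by rw [hc]
    rw [Nat.mul_add_mod, Nat.mul_add_mod, Nat.mod_eq_of_lt hs, Nat.mod_eq_of_lt ht] at h1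
    apply hrl
    have : m * r = m * l := by omega
    exact Nat.eq_of_mul_eq_mul_left (by omega) this
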